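/- arXiv:math/0502039 — 3 statements merged into one kernel-verified Lean document; each statement's English description precedes it below -/
import Mathlib

section
/- Let A be a trace class operator on a Hilbert space H such that I+A is invertible, let P be a (bounded idempotent) projection on H and Q = I - P. Then det[P(I+A)^{-1}P + Q] = det(I + QAQ) / det(I + A). -/
open Filter

noncomputable section

variable {H : Type*} [NormedAddCommGroup H] [InnerProductSpace ℂ H] [CompleteSpace H]

def IsTraceClass (A : H →L[ℂ] H) : Prop :=
  ∃ M : ℝ, ∀ (n : ℕ) (e f : Fin n → H), Orthonormal ℂ e → Orthonormal ℂ f →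
    ∑ i, ‖(inner ℂ (e i) (A (f i)) : ℂ)‖ ≤ M

def traceNorm (A : H →L[ℂ] H) : ℝ :=
  sSup {s : ℝ | ∃ (n : ℕ) (e f : Fin n → H), Orthonormal ℂ e ∧ Orthonormal ℂ f ∧
    s = ∑ i, ‖(inner ℂ (e i) (A (f i)) : ℂ)‖}

/-!
Write `B = (I + A)⁻¹`, `K = B - I = -BA` (trace class) and `Q = I - P`, so that
`PBP + Q = I + PKP`. Since `QP = PQ = 0` there are the block factorizations
`(I + PKQ)(I + PKP) = I + PK`, `(I + PK)(I + A) = I + QA` and `(I + QAP)(I + QAQ) = I + QA`,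
so multiplicativity reduces the formula to `det(I + PKQ) = det(I + QAP) = 1`.

In general `det(I + RNS) = 1` when `N` is trace class and `SR = 0`: for `N` a finite sum of
rank-one operators `u ⊗ v`, `RNS` is a sum of `Ru ⊗ S*v` with `⟪S*v, Ru'⟫ = ⟪v, SRu'⟫ = 0`, so its
determinant is a product of factors `1`; general `N` follows by approximating it in trace norm.
This uses that the trace class is an ideal whose finite-rank elements are trace-norm dense; both
come from the bound `∑ |⟪x i, T (y i)⟫| ≤ ‖T‖₁` for families `x`, `y` with Gram matrices `≤ 1`,
proved by diagonalizing a Gram matrix through a unitary change of index.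
-/

open scoped InnerProductSpace

theorem sum_eq_sum_subtype_of_eq_zero {ι M : Type*} [Fintype ι] [AddCommMonoid M] (p : ι → Prop)
    [DecidablePred p] {g : ι → M} (hg : ∀ i, ¬p i → g i = 0) :
    ∑ i, g i = ∑ s : {i // p i}, g s := by
  have h0 : ∑ s : {i // ¬p i}, g s = 0 := Finset.sum_eq_zero fun s _ => hg s s.2
  rw [← Fintype.sum_subtype_add_sum_subtype p g, h0, add_zero]

section Recombination

variable {𝕜 E ι : Type*} [RCLike 𝕜] [NormedAddCommGroup E] [InnerProductSpace 𝕜 E]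

theorem orthonormal_inv_norm_smul {y : ι → E} (hy : Pairwise fun i j => ⟪y i, y j⟫_𝕜 = 0) :
    Orthonormal 𝕜 (fun s : {i // y i ≠ 0} => (‖y s‖ : 𝕜)⁻¹ • y s) := by
  refine ⟨fun s => norm_smul_inv_norm s.2, fun s t hst => ?_⟩
  simp only
  rw [inner_smul_left, inner_smul_right, hy (Subtype.coe_injective.ne hst), mul_zero, mul_zero]

variable [Fintype ι]

open Matrix

def recombine (U : Matrix ι ι 𝕜) (x : ι → E) : ι → E := fun l => ∑ i, U i l • x i

theorem gram_recombine (U : Matrix ι ι 𝕜) (x : ι → E) :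
    gram 𝕜 (recombine U x) = Uᴴ * gram 𝕜 x * U := by
  ext l m
  simp only [gram_apply, recombine, sum_inner, inner_sum, inner_smul_left, inner_smul_right,
    mul_apply, conjTranspose_apply, RCLike.star_def, Finset.sum_mul, Finset.mul_sum]
  refine Finset.sum_congr rfl fun i _ => Finset.sum_congr rfl fun j _ => ?_
  ring

theorem map_recombine {F : Type*} [NormedAddCommGroup F] [InnerProductSpace 𝕜 F]
    (L : E →L[𝕜] F) (U : Matrix ι ι 𝕜) (x : ι → E) (l : ι) :
    L (recombine U x l) = recombine U (fun i => L (x i)) l := by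
  simp [recombine]

variable [DecidableEq ι]

theorem sum_inner_recombine {U : Matrix ι ι 𝕜} (hU : U ∈ unitaryGroup ι 𝕜) (x z : ι → E) :
    ∑ l, ⟪recombine U x l, recombine U z l⟫_𝕜 = ∑ i, ⟪x i, z i⟫_𝕜 := by
  have hUU := congr_fun₂ (mem_unitaryGroup_iff.mp hU)
  simp only [mul_apply, star_apply, RCLike.star_def] at hUU
  calc ∑ l, ⟪recombine U x l, recombine U z l⟫_𝕜
      = ∑ j, ∑ i, (∑ l, U j l * (starRingEnd 𝕜) (U i l)) * ⟪x i, z j⟫_𝕜 := by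
        simp only [recombine, sum_inner, inner_sum, inner_smul_left, inner_smul_right,
          Finset.sum_mul, Finset.mul_sum]
        rw [Finset.sum_comm]
        refine Finset.sum_congr rfl fun j _ => ?_
        rw [Finset.sum_comm]
        refine Finset.sum_congr rfl fun i _ => Finset.sum_congr rfl fun l _ => ?_
        ring
    _ = ∑ i, ⟪x i, z i⟫_𝕜 := by simp [hUU, one_apply]

theorem Orthonormal.recombine {f : ι → E} (hf : Orthonormal 𝕜 f) {U : Matrix ι ι 𝕜}
    (hU : U ∈ unitaryGroup ι 𝕜) : Orthonormal 𝕜 (recombine U f) := by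
  rw [← gram_eq_one_iff_orthonormal, gram_recombine, gram_eq_one_iff_orthonormal.mpr hf,
    mul_one, ← star_eq_conjTranspose, mem_unitaryGroup_iff'.mp hU]

theorem exists_mem_unitaryGroup_pairwise_inner_recombine_eq_zero (x : ι → E) :
    ∃ U ∈ unitaryGroup ι 𝕜, Pairwise fun l m => ⟪recombine U x l, recombine U x m⟫_𝕜 = 0 := by
  have hG := isHermitian_gram 𝕜 x
  refine ⟨hG.eigenvectorUnitary, hG.eigenvectorUnitary.2, fun l m hlm => ?_⟩
  have h := congr_fun₂ hG.conjStarAlgAut_star_eigenvectorUnitary l m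
  rwa [Unitary.conjStarAlgAut_star_apply, star_eq_conjTranspose, ← gram_recombine,
    diagonal_apply_ne _ hlm] at h

end Recombination

section ContractiveFamily

open Matrix
open scoped ComplexOrder

variable {𝕜 E ι κ : Type*} [RCLike 𝕜] [NormedAddCommGroup E] [InnerProductSpace 𝕜 E]
  [DecidableEq ι] [DecidableEq κ]

variable (𝕜) in
def IsContractiveFamily (x : ι → E) : Prop :=
  (1 - gram 𝕜 x).PosSemidef

theorem isContractiveFamily_iff [Fintype ι] {x : ι → E} :
    IsContractiveFamily 𝕜 x ↔ ∀ c : ι → 𝕜, ‖∑ i, c i • x i‖ ^ 2 ≤ ∑ i, ‖c i‖ ^ 2 := by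
  have key : ∀ c : ι → 𝕜, star c ⬝ᵥ (1 - gram 𝕜 x) *ᵥ c
      = ((∑ i, ‖c i‖ ^ 2 - ‖∑ i, c i • x i‖ ^ 2 : ℝ) : 𝕜) := by
    intro c
    rw [sub_mulVec, one_mulVec, dotProduct_sub, star_dotProduct_gram_mulVec,
      inner_self_eq_norm_sq_to_K]
    simp [dotProduct, RCLike.conj_mul]
  rw [IsContractiveFamily, posSemidef_iff_dotProduct_mulVec]
  simp only [key, RCLike.ofReal_nonneg, sub_nonneg]
  exact and_iff_right (isHermitian_one.sub (isHermitian_gram 𝕜 x))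

theorem Orthonormal.isContractiveFamily {x : ι → E} (hx : Orthonormal 𝕜 x) :
    IsContractiveFamily 𝕜 x := by
  rw [IsContractiveFamily, gram_eq_one_iff_orthonormal.mpr hx, sub_self]
  exact .zero

namespace IsContractiveFamily

variable {x : ι → E}

theorem norm_le_one (hx : IsContractiveFamily 𝕜 x) (i : ι) : ‖x i‖ ≤ 1 := by
  have h := hx.diag_nonneg (i := i)
  rw [Matrix.sub_apply, one_apply_eq, gram_apply, inner_self_eq_norm_sq_to_K, sub_nonneg] at h
  exact (pow_le_one_iff_of_nonneg (norm_nonneg _) two_ne_zero).mp (by exact_mod_cast h)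

theorem comp (hx : IsContractiveFamily 𝕜 x) {e : κ → ι} (he : Function.Injective e) :
    IsContractiveFamily 𝕜 (x ∘ e) := by
  have h : 1 - gram 𝕜 (x ∘ e) = (1 - gram 𝕜 x).submatrix e e := by
    ext k l
    simp [Matrix.one_apply, he.eq_iff]
  rw [IsContractiveFamily, h]
  exact hx.submatrix e

theorem smul [Fintype ι] (hx : IsContractiveFamily 𝕜 x) {a : ι → 𝕜} (ha : ∀ i, ‖a i‖ ≤ 1) :
    IsContractiveFamily 𝕜 (fun i => a i • x i) := by
  rw [isContractiveFamily_iff] at hx ⊢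
  intro c
  calc ‖∑ i, c i • a i • x i‖ ^ 2 = ‖∑ i, (c i * a i) • x i‖ ^ 2 := by simp only [smul_smul]
    _ ≤ ∑ i, ‖c i * a i‖ ^ 2 := hx _
    _ ≤ ∑ i, ‖c i‖ ^ 2 := by
        gcongr with i
        rw [norm_mul]
        exact mul_le_of_le_one_right (norm_nonneg _) (ha i)

theorem map {F : Type*} [NormedAddCommGroup F] [InnerProductSpace 𝕜 F]
    [Fintype ι] (hx : IsContractiveFamily 𝕜 x) {L : E →L[𝕜] F} (hL : ‖L‖ ≤ 1) :
    IsContractiveFamily 𝕜 (fun i => L (x i)) := by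
  rw [isContractiveFamily_iff] at hx ⊢
  intro c
  calc ‖∑ i, c i • L (x i)‖ ^ 2 = ‖L (∑ i, c i • x i)‖ ^ 2 := by simp
    _ ≤ ‖∑ i, c i • x i‖ ^ 2 := by gcongr; exact L.le_of_opNorm_le hL _ |>.trans (by simp)
    _ ≤ ∑ i, ‖c i‖ ^ 2 := hx c

theorem sumElim [Fintype ι] [Fintype κ] (hx : IsContractiveFamily 𝕜 x) {y : κ → E}
    (hy : IsContractiveFamily 𝕜 y) (hxy : ∀ i j, ⟪x i, y j⟫_𝕜 = 0) :
    IsContractiveFamily 𝕜 (Sum.elim x y) := by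
  rw [isContractiveFamily_iff] at hx hy ⊢
  intro c
  have horth : ⟪∑ i, c (.inl i) • x i, ∑ j, c (.inr j) • y j⟫_𝕜 = 0 := by
    simp [sum_inner, inner_sum, inner_smul_left, inner_smul_right, hxy]
  simp only [Fintype.sum_sum_type, Sum.elim_inl, Sum.elim_inr]
  rw [norm_add_sq (𝕜 := 𝕜), horth, map_zero, mul_zero, add_zero]
  exact add_le_add (hx _) (hy _)

end IsContractiveFamily

theorem IsContractiveFamily.recombine [Fintype ι] {x : ι → E} (hx : IsContractiveFamily 𝕜 x)
    {U : Matrix ι ι 𝕜} (hU : U ∈ unitaryGroup ι 𝕜) : IsContractiveFamily 𝕜 (recombine U x) := by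
  have h : 1 - gram 𝕜 (_root_.recombine U x) = Uᴴ * (1 - gram 𝕜 x) * U := by
    rw [gram_recombine, Matrix.mul_sub, Matrix.sub_mul, mul_one, ← star_eq_conjTranspose,
      mem_unitaryGroup_iff'.mp hU]
  rw [IsContractiveFamily, h]
  exact hx.conjTranspose_mul_mul_same U

end ContractiveFamily

section TraceClass

variable {E : Type*} [NormedAddCommGroup E] [InnerProductSpace ℂ E] {T : E →L[ℂ] E}

theorem sum_norm_inner_le_traceNorm (hT : IsTraceClass T) {ι : Type*} [Fintype ι]
    {e f : ι → E} (he : Orthonormal ℂ e) (hf : Orthonormal ℂ f) :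
    ∑ i, ‖⟪e i, T (f i)⟫_ℂ‖ ≤ traceNorm T := by
  obtain ⟨M, hM⟩ := hT
  let σ := (Fintype.equivFin ι).symm
  refine le_csSup ⟨M, ?_⟩ ⟨_, e ∘ σ, f ∘ σ, he.comp σ σ.injective, hf.comp σ σ.injective,
    (Equiv.sum_comp σ fun i => ‖⟪e i, T (f i)⟫_ℂ‖).symm⟩
  rintro s ⟨n, e', f', he', hf', rfl⟩
  exact hM n e' f' he' hf'

theorem traceNorm_le {M : ℝ} (hM : ∀ (n : ℕ) (e f : Fin n → E), Orthonormal ℂ e →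
    Orthonormal ℂ f → ∑ i, ‖⟪e i, T (f i)⟫_ℂ‖ ≤ M) : traceNorm T ≤ M := by
  refine csSup_le ⟨0, 0, Fin.elim0, Fin.elim0, .of_isEmpty _, .of_isEmpty _, by simp⟩ ?_
  rintro s ⟨n, e, f, he, hf, rfl⟩
  exact hM n e f he hf

theorem exists_lt_sum_norm_inner {r : ℝ} (hr : r < traceNorm T) :
    ∃ (n : ℕ) (e f : Fin n → E), Orthonormal ℂ e ∧ Orthonormal ℂ f ∧
      r < ∑ i, ‖⟪e i, T (f i)⟫_ℂ‖ := by
  by_contra! h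
  exact hr.not_ge (traceNorm_le fun n e f he hf => h n e f he hf)

theorem traceNorm_nonneg (hT : IsTraceClass T) : 0 ≤ traceNorm T := by
  have h0 : Orthonormal ℂ (Fin.elim0 : Fin 0 → E) := .of_isEmpty _
  simpa using sum_norm_inner_le_traceNorm hT h0 h0

variable (E) in
def traceClass : Submodule ℂ (E →L[ℂ] E) where
  carrier := {T | IsTraceClass T}
  zero_mem' := ⟨0, fun _ _ _ _ _ => by simp⟩
  add_mem' := by
    rintro S T ⟨M, hM⟩ ⟨N, hN⟩
    refine ⟨M + N, fun n e f he hf => ?_⟩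
    calc ∑ i, ‖⟪e i, (S + T) (f i)⟫_ℂ‖
        ≤ ∑ i, (‖⟪e i, S (f i)⟫_ℂ‖ + ‖⟪e i, T (f i)⟫_ℂ‖) := by
          gcongr with i
          rw [_root_.add_apply, inner_add_right]
          exact norm_add_le _ _
      _ ≤ M + N := by
          rw [Finset.sum_add_distrib]
          exact add_le_add (hM n e f he hf) (hN n e f he hf)
  smul_mem' := by
    rintro c T ⟨M, hM⟩
    refine ⟨‖c‖ * M, fun n e f he hf => ?_⟩
    simp only [_root_.smul_apply, inner_smul_right, norm_mul, ← Finset.mul_sum]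
    exact mul_le_mul_of_nonneg_left (hM n e f he hf) (norm_nonneg c)

theorem norm_sum_inner_le_traceNorm_of_orthonormal (hT : IsTraceClass T) {ι : Type*} [Fintype ι]
    [DecidableEq ι] {x f : ι → E} (hx : IsContractiveFamily ℂ x) (hf : Orthonormal ℂ f) :
    ‖∑ i, ⟪x i, T (f i)⟫_ℂ‖ ≤ traceNorm T := by
  classical
  -- A unitary change of index keeps `f` orthonormal and makes `x` orthogonal; normalizing the
  -- nonzero `x' l` then leaves weights `‖x' l‖ ≤ 1` in front of an orthonormal pair of families.
  obtain ⟨U, hU, hdiag⟩ := exists_mem_unitaryGroup_pairwise_inner_recombine_eq_zero (𝕜 := ℂ) x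
  set x' := recombine U x
  set f' := recombine U f
  let ψ := fun s : {l // x' l ≠ 0} => (‖x' s‖ : ℂ)⁻¹ • x' s
  have hψ : Orthonormal ℂ ψ := orthonormal_inv_norm_smul hdiag
  have hf' : Orthonormal ℂ (fun s : {l // x' l ≠ 0} => f' s) :=
    (hf.recombine hU).comp Subtype.val Subtype.val_injective
  have hcomb : ∑ i, ⟪x i, T (f i)⟫_ℂ = ∑ l, ⟪x' l, T (f' l)⟫_ℂ := by
    simp_rw [x', f', map_recombine, sum_inner_recombine hU]
  have hsum : ∑ i, ⟪x i, T (f i)⟫_ℂ = ∑ s : {l // x' l ≠ 0}, ‖x' s‖ * ⟪ψ s, T (f' s)⟫_ℂ := by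
    rw [hcomb, sum_eq_sum_subtype_of_eq_zero (fun l => x' l ≠ 0) fun l hl => by
      rw [not_not.mp hl, inner_zero_left]]
    refine Finset.sum_congr rfl fun s _ => ?_
    rw [inner_smul_left, ← mul_assoc, map_inv₀, Complex.conj_ofReal,
      mul_inv_cancel₀ (by exact_mod_cast norm_ne_zero_iff.mpr s.2), one_mul]
  calc ‖∑ i, ⟪x i, T (f i)⟫_ℂ‖ ≤ ∑ s : {l // x' l ≠ 0}, ‖x' s‖ * ‖⟪ψ s, T (f' s)⟫_ℂ‖ := by
        rw [hsum]
        refine (norm_sum_le _ _).trans (le_of_eq (Finset.sum_congr rfl fun s _ => ?_))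
        rw [norm_mul, Complex.norm_real, norm_norm]
    _ ≤ ∑ s : {l // x' l ≠ 0}, ‖⟪ψ s, T (f' s)⟫_ℂ‖ := by
        gcongr with s
        exact mul_le_of_le_one_left (norm_nonneg _) ((hx.recombine hU).norm_le_one s)
    _ ≤ traceNorm T := sum_norm_inner_le_traceNorm hT hψ hf'

theorem norm_sum_inner_le_traceNorm_of_isContractiveFamily (hT : IsTraceClass T) {ι : Type*}
    [Fintype ι] [DecidableEq ι] {x y : ι → E} (hx : IsContractiveFamily ℂ x)
    (hy : IsContractiveFamily ℂ y) : ‖∑ i, ⟪x i, T (y i)⟫_ℂ‖ ≤ traceNorm T := by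
  classical
  obtain ⟨U, hU, hdiag⟩ := exists_mem_unitaryGroup_pairwise_inner_recombine_eq_zero (𝕜 := ℂ) y
  set x' := recombine U x
  set y' := recombine U y
  let ψ := fun s : {l // y' l ≠ 0} => (‖y' s‖ : ℂ)⁻¹ • y' s
  have hxy : IsContractiveFamily ℂ (fun s : {l // y' l ≠ 0} => (‖y' s‖ : ℂ) • x' s) :=
    ((hx.recombine hU).comp Subtype.val_injective).smul fun s => by
      simpa using (hy.recombine hU).norm_le_one s
  have hcomb : ∑ i, ⟪x i, T (y i)⟫_ℂ = ∑ l, ⟪x' l, T (y' l)⟫_ℂ := by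
    simp_rw [x', y', map_recombine, sum_inner_recombine hU]
  have hsum : ∑ i, ⟪x i, T (y i)⟫_ℂ =
      ∑ s : {l // y' l ≠ 0}, ⟪(‖y' s‖ : ℂ) • x' s, T (ψ s)⟫_ℂ := by
    rw [hcomb, sum_eq_sum_subtype_of_eq_zero (fun l => y' l ≠ 0) fun l hl => by
      rw [not_not.mp hl, map_zero, inner_zero_right]]
    refine Finset.sum_congr rfl fun s _ => ?_
    rw [inner_smul_left, map_smul, inner_smul_right, Complex.conj_ofReal, ← mul_assoc,
      mul_inv_cancel₀ (by exact_mod_cast norm_ne_zero_iff.mpr s.2), one_mul]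
  rw [hsum]
  exact norm_sum_inner_le_traceNorm_of_orthonormal hT hxy (orthonormal_inv_norm_smul hdiag)

theorem sum_norm_inner_le_traceNorm_of_isContractiveFamily (hT : IsTraceClass T) {ι : Type*}
    [Fintype ι] [DecidableEq ι] {x y : ι → E} (hx : IsContractiveFamily ℂ x)
    (hy : IsContractiveFamily ℂ y) : ∑ i, ‖⟪x i, T (y i)⟫_ℂ‖ ≤ traceNorm T := by
  let z := fun i => ⟪x i, T (y i)⟫_ℂ
  have hphase : ∀ i, ⟪(z i / ‖z i‖) • x i, T (y i)⟫_ℂ = ‖z i‖ := fun i => by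
    rw [inner_smul_left, map_div₀, Complex.conj_ofReal, div_mul_eq_mul_div, Complex.conj_mul', sq,
      mul_self_div_self]
  have hx' : IsContractiveFamily ℂ (fun i => (z i / ‖z i‖) • x i) :=
    hx.smul fun i => by rw [norm_div, Complex.norm_real, norm_norm]; exact div_self_le_one _
  calc ∑ i, ‖z i‖ = ‖∑ i, ⟪(z i / ‖z i‖) • x i, T (y i)⟫_ℂ‖ := by
        simp_rw [hphase, ← Complex.ofReal_sum, Complex.norm_real, Real.norm_eq_abs]
        exact (abs_of_nonneg (Finset.sum_nonneg fun i _ => norm_nonneg _)).symm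
    _ ≤ traceNorm T := norm_sum_inner_le_traceNorm_of_isContractiveFamily hT hx' hy

theorem sum_norm_inner_mul_mul_le [CompleteSpace E] (hT : IsTraceClass T) (L R : E →L[ℂ] E)
    {n : ℕ} {e f : Fin n → E} (he : Orthonormal ℂ e) (hf : Orthonormal ℂ f) :
    ∑ i, ‖⟪e i, (L * T * R) (f i)⟫_ℂ‖ ≤ ‖L‖ * ‖R‖ * traceNorm T := by
  rcases eq_or_ne L 0 with rfl | hL
  · simp
  rcases eq_or_ne R 0 with rfl | hR
  · simp
  let L' := (‖L‖ : ℂ)⁻¹ • ContinuousLinearMap.adjoint L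
  let R' := (‖R‖ : ℂ)⁻¹ • R
  have hnorm : ∀ M : E →L[ℂ] E, ‖(‖M‖ : ℂ)⁻¹ • M‖ ≤ 1 := fun M => by
    rw [norm_smul, norm_inv, Complex.norm_real, norm_norm]
    exact inv_mul_le_one_of_le₀ le_rfl (norm_nonneg M)
  have hL' : ‖L'‖ ≤ 1 := by
    simpa only [L', LinearIsometryEquiv.norm_map] using hnorm (ContinuousLinearMap.adjoint L)
  have hterm : ∀ i, ⟪e i, (L * T * R) (f i)⟫_ℂ = ‖L‖ * ‖R‖ * ⟪L' (e i), T (R' (f i))⟫_ℂ := by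
    intro i
    change ⟪e i, L (T (R (f i)))⟫_ℂ = _
    simp only [L', R', _root_.smul_apply, map_smul, inner_smul_left, inner_smul_right,
      map_inv₀, Complex.conj_ofReal, ContinuousLinearMap.adjoint_inner_left]
    have hL0 : (‖L‖ : ℂ) ≠ 0 := by exact_mod_cast norm_ne_zero_iff.mpr hL
    have hR0 : (‖R‖ : ℂ) ≠ 0 := by exact_mod_cast norm_ne_zero_iff.mpr hR
    field_simp
  calc ∑ i, ‖⟪e i, (L * T * R) (f i)⟫_ℂ‖ = ‖L‖ * ‖R‖ * ∑ i, ‖⟪L' (e i), T (R' (f i))⟫_ℂ‖ := by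
        simp_rw [hterm, norm_mul, Complex.norm_real, norm_norm, Finset.mul_sum]
    _ ≤ ‖L‖ * ‖R‖ * traceNorm T := by
        gcongr
        exact sum_norm_inner_le_traceNorm_of_isContractiveFamily hT
          (he.isContractiveFamily.map hL') (hf.isContractiveFamily.map (hnorm R))

theorem IsTraceClass.mul_mul [CompleteSpace E] (hT : IsTraceClass T) (L R : E →L[ℂ] E) :
    IsTraceClass (L * T * R) :=
  ⟨_, fun _ _ _ he hf => sum_norm_inner_mul_mul_le hT L R he hf⟩

theorem traceNorm_mul_mul_le [CompleteSpace E] (hT : IsTraceClass T) (L R : E →L[ℂ] E) :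
    traceNorm (L * T * R) ≤ ‖L‖ * ‖R‖ * traceNorm T :=
  traceNorm_le fun _ _ _ he hf => sum_norm_inner_mul_mul_le hT L R he hf

open InnerProductSpace in
theorem isTraceClass_rankOne (u v : E) : IsTraceClass (rankOne ℂ u v) := by
  refine ⟨‖v‖ * ‖u‖, fun n e f he hf => ?_⟩
  have hbessel : ∀ {g : Fin n → E}, Orthonormal ℂ g → ∀ w : E,
      √(∑ i, ‖⟪g i, w⟫_ℂ‖ ^ 2) ≤ ‖w‖ := fun hg w =>
    (Real.sqrt_le_left (norm_nonneg w)).mpr (hg.sum_inner_products_le w)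
  calc ∑ i, ‖⟪e i, rankOne ℂ u v (f i)⟫_ℂ‖ = ∑ i, ‖⟪f i, v⟫_ℂ‖ * ‖⟪e i, u⟫_ℂ‖ := by
        simp [norm_inner_symm v]
    _ ≤ √(∑ i, ‖⟪f i, v⟫_ℂ‖ ^ 2) * √(∑ i, ‖⟪e i, u⟫_ℂ‖ ^ 2) :=
        Real.sum_mul_le_sqrt_mul_sqrt _ _ _
    _ ≤ ‖v‖ * ‖u‖ := by gcongr <;> [exact hbessel hf v; exact hbessel he u]

variable (E) in
def spanRankOne : Submodule ℂ (E →L[ℂ] E) :=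
  Submodule.span ℂ (Set.range fun p : E × E => InnerProductSpace.rankOne ℂ p.1 p.2)

theorem rankOne_mem_spanRankOne (u v : E) : InnerProductSpace.rankOne ℂ u v ∈ spanRankOne E :=
  Submodule.subset_span ⟨(u, v), rfl⟩

theorem spanRankOne_le_traceClass : spanRankOne E ≤ traceClass E :=
  Submodule.span_le.mpr <| Set.range_subset_iff.mpr fun p => isTraceClass_rankOne p.1 p.2

theorem mul_mem_spanRankOne_left (X : E →L[ℂ] E) {F : E →L[ℂ] E} (hF : F ∈ spanRankOne E) :
    X * F ∈ spanRankOne E := by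
  refine (Submodule.span_le.mpr ?_ : spanRankOne E ≤ (spanRankOne E).comap
    (LinearMap.mulLeft ℂ X)) hF
  rintro _ ⟨⟨u, v⟩, rfl⟩
  simpa [ContinuousLinearMap.mul_def, InnerProductSpace.comp_rankOne] using
    rankOne_mem_spanRankOne (X u) v

theorem mul_mem_spanRankOne_right [CompleteSpace E] (X : E →L[ℂ] E) {F : E →L[ℂ] E}
    (hF : F ∈ spanRankOne E) : F * X ∈ spanRankOne E := by
  refine (Submodule.span_le.mpr ?_ : spanRankOne E ≤ (spanRankOne E).comap
    (LinearMap.mulRight ℂ X)) hF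
  rintro _ ⟨⟨u, v⟩, rfl⟩
  simpa [ContinuousLinearMap.mul_def, InnerProductSpace.rankOne_comp] using
    rankOne_mem_spanRankOne u (ContinuousLinearMap.adjoint X v)

theorem starProjection_mem_spanRankOne (K : Submodule ℂ E) [FiniteDimensional ℂ K] :
    K.starProjection ∈ spanRankOne E := by
  rw [(stdOrthonormalBasis ℂ K).starProjection_eq_sum_rankOne]
  exact Submodule.sum_mem _ fun i _ => rankOne_mem_spanRankOne _ _

theorem exists_mem_spanRankOne_traceNorm_sub_le [CompleteSpace E] (hT : IsTraceClass T) {ε : ℝ}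
    (hε : 0 < ε) : ∃ F ∈ spanRankOne E, traceNorm (F - T) ≤ ε := by
  obtain ⟨n, e, f, he, hf, hlt⟩ := exists_lt_sum_norm_inner (sub_lt_self (traceNorm T) hε)
  set K := Submodule.span ℂ (Set.range e)
  set K' := Submodule.span ℂ (Set.range f)
  have : FiniteDimensional ℂ K := FiniteDimensional.span_of_finite ℂ (Set.finite_range e)
  have : FiniteDimensional ℂ K' := FiniteDimensional.span_of_finite ℂ (Set.finite_range f)
  set P := Kᗮ.starProjection
  set P' := K'ᗮ.starProjection
  -- The error `P T P'` is `T` compressed to the complements of `span e` and `span f`: orthonormal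
  -- `g`, `h` compressed there can be appended to `e`, `f`, so it has trace norm at most
  -- `traceNorm T - ∑ ‖⟪e i, T (f i)⟫‖ < ε`.
  refine ⟨T - P * T * P', ?_, traceNorm_le fun m g h hg hh => ?_⟩
  · have hF : T - P * T * P' = K.starProjection * T + P * T * K'.starProjection := by
      simp only [P, P', Submodule.starProjection_orthogonal']
      noncomm_ring
    rw [hF]
    exact add_mem (mul_mem_spanRankOne_right T (starProjection_mem_spanRankOne K))
      (mul_mem_spanRankOne_left (P * T) (starProjection_mem_spanRankOne K'))
  have hx : IsContractiveFamily ℂ (Sum.elim e fun j => P (g j)) :=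
    he.isContractiveFamily.sumElim (hg.isContractiveFamily.map (Submodule.starProjection_norm_le _))
      fun i j => Submodule.inner_right_of_mem_orthogonal (K := K) (Submodule.subset_span ⟨i, rfl⟩)
        (Kᗮ.starProjection_apply_mem _)
  have hy : IsContractiveFamily ℂ (Sum.elim f fun j => P' (h j)) :=
    hf.isContractiveFamily.sumElim (hh.isContractiveFamily.map (Submodule.starProjection_norm_le _))
      fun i j => Submodule.inner_right_of_mem_orthogonal (K := K') (Submodule.subset_span ⟨i, rfl⟩)
        (K'ᗮ.starProjection_apply_mem _)
  have hsum := sum_norm_inner_le_traceNorm_of_isContractiveFamily hT hx hy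
  simp only [Fintype.sum_sum_type, Sum.elim_inl, Sum.elim_inr] at hsum
  have hterm : ∀ j, ‖⟪g j, (T - P * T * P' - T) (h j)⟫_ℂ‖ = ‖⟪P (g j), T (P' (h j))⟫_ℂ‖ := by
    intro j
    rw [sub_sub_cancel_left, _root_.neg_apply, inner_neg_right, norm_neg,
      Submodule.inner_starProjection_left_eq_right]
    rfl
  simp only [hterm]
  linarith

end TraceClass

section Determinant

variable {E : Type*} [NormedAddCommGroup E] [InnerProductSpace ℂ E] [CompleteSpace E]
  {det : (E →L[ℂ] E) → ℂ}

theorem det_one_add_mul_mul_eq_one_of_mem_spanRankOne (hdet_one : det 1 = 1)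
    (hdet_mul : ∀ A B : E →L[ℂ] E, IsTraceClass A → IsTraceClass B →
      det ((1 + A) * (1 + B)) = det (1 + A) * det (1 + B))
    (hdet_rankOne : ∀ u v : E, det (1 + (innerSL ℂ v).smulRight u) = 1 + (inner ℂ v u : ℂ))
    {R S F : E →L[ℂ] E} (hSR : S * R = 0) (hF : F ∈ spanRankOne E) :
    det (1 + R * F * S) = 1 := by
  -- Generalized to all multiples of `F` so that the induction over the span passes `smul`.
  suffices h : ∀ c : ℂ, det (1 + c • (R * F * S)) = 1 by simpa using h 1
  induction hF using Submodule.span_induction with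
  | mem _ hF =>
    obtain ⟨⟨u, v⟩, rfl⟩ := hF
    intro c
    have hRS : c • (R * InnerProductSpace.rankOne ℂ u v * S) =
        InnerProductSpace.rankOne ℂ (c • R u) (ContinuousLinearMap.adjoint S v) := by
      ext w
      simp [ContinuousLinearMap.adjoint_inner_left, smul_smul]
    rw [hRS, InnerProductSpace.rankOne_def, hdet_rankOne, inner_smul_right,
      ContinuousLinearMap.adjoint_inner_left, show S (R u) = (S * R) u from rfl, hSR]
    simp
  | zero => simpa using hdet_one
  | add F G hF hG ihF ihG =>
    intro c
    have htc : ∀ X ∈ spanRankOne E, IsTraceClass (c • (R * X * S)) := fun X hX =>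
      (traceClass E).smul_mem c ((spanRankOne_le_traceClass hX).mul_mul R S)
    have hprod : (1 + c • (R * F * S)) * (1 + c • (R * G * S)) = 1 + c • (R * (F + G) * S) :=
      calc _ = 1 + c • (R * (F + G) * S) + (c * c) • (R * F * (S * R) * G * S) := by
            simp only [add_mul, mul_add, one_mul, mul_one, smul_mul_smul, smul_add, mul_assoc]
            abel
        _ = _ := by simp [hSR]
    rw [← hprod, hdet_mul _ _ (htc F hF) (htc G hG), ihF, ihG, one_mul]
  | smul d F hF ih =>
    intro c
    simpa [smul_smul] using ih (c * d)

theorem det_one_add_mul_mul_eq_one (hdet_one : det 1 = 1)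
    (hdet_mul : ∀ A B : E →L[ℂ] E, IsTraceClass A → IsTraceClass B →
      det ((1 + A) * (1 + B)) = det (1 + A) * det (1 + B))
    (hdet_rankOne : ∀ u v : E, det (1 + (innerSL ℂ v).smulRight u) = 1 + (inner ℂ v u : ℂ))
    (hdet_cont : ∀ (A : ℕ → E →L[ℂ] E) (B : E →L[ℂ] E), (∀ n, IsTraceClass (A n)) →
      IsTraceClass B → Tendsto (fun n => traceNorm (A n - B)) atTop (nhds 0) →
      Tendsto (fun n => det (1 + A n)) atTop (nhds (det (1 + B))))
    {R S N : E →L[ℂ] E} (hSR : S * R = 0) (hN : IsTraceClass N) :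
    det (1 + R * N * S) = 1 := by
  choose F hF hFN using fun k : ℕ =>
    exists_mem_spanRankOne_traceNorm_sub_le hN (Nat.one_div_pos_of_nat (n := k))
  have hFN_tc : ∀ k, IsTraceClass (F k - N) := fun k =>
    (traceClass E).sub_mem (spanRankOne_le_traceClass (hF k)) hN
  have hbound : Tendsto (fun k : ℕ => ‖R‖ * ‖S‖ * (1 / ((k : ℝ) + 1))) atTop (nhds 0) := by
    simpa using tendsto_one_div_add_atTop_nhds_zero_nat.const_mul (‖R‖ * ‖S‖)
  have hlim : Tendsto (fun k => traceNorm (R * F k * S - R * N * S)) atTop (nhds 0) := by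
    refine squeeze_zero (fun k => traceNorm_nonneg ?_) (fun k => ?_) hbound
    all_goals rw [← sub_mul, ← mul_sub]
    · exact (hFN_tc k).mul_mul R S
    · exact (traceNorm_mul_mul_le (hFN_tc k) R S).trans (by gcongr; exact hFN k)
  refine tendsto_nhds_unique (hdet_cont _ _ (fun k => ?_) (hN.mul_mul R S) hlim) ?_
  · exact (spanRankOne_le_traceClass (hF k)).mul_mul R S
  simp only [det_one_add_mul_mul_eq_one_of_mem_spanRankOne hdet_one hdet_mul hdet_rankOne hSR
    (hF _)]
  exact tendsto_const_nhds

end Determinant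

section BlockFactorization

variable {R : Type*} [Ring R]

theorem IsIdempotentElem.one_add_mul_eq_mul {p : R} (hp : IsIdempotentElem p) (x : R) :
    1 + p * x = (1 + p * x * (1 - p)) * (1 + p * x * p) :=
  calc 1 + p * x = 1 + p * x + p * x * ((1 - p) * p) * x * p := by
        rw [hp.one_sub_mul_self]; noncomm_ring
    _ = _ := by noncomm_ring

theorem one_add_mul_sub_one_mul_one_add {a b : R} (hb : b * (1 + a) = 1) (p : R) :
    (1 + p * (b - 1)) * (1 + a) = 1 + (1 - p) * a :=
  calc (1 + p * (b - 1)) * (1 + a) = 1 + a + p * (b * (1 + a) - (1 + a)) := by noncomm_ring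
    _ = _ := by rw [hb]; noncomm_ring

end BlockFactorization

theorem det_projection_inverse_formula_general
    (det : (H →L[ℂ] H) → ℂ)
    (hdet_one : det 1 = 1)
    (hdet_mul : ∀ A B : H →L[ℂ] H, IsTraceClass A → IsTraceClass B →
      det ((1 + A) * (1 + B)) = det (1 + A) * det (1 + B))
    (hdet_rankOne : ∀ u v : H, det (1 + (innerSL ℂ v).smulRight u) = 1 + (inner ℂ v u : ℂ))
    (hdet_cont : ∀ (A : ℕ → H →L[ℂ] H) (B : H →L[ℂ] H), (∀ n, IsTraceClass (A n)) →
      IsTraceClass B → Tendsto (fun n => traceNorm (A n - B)) atTop (nhds 0) →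
      Tendsto (fun n => det (1 + A n)) atTop (nhds (det (1 + B))))
    (A : H →L[ℂ] H) (hA : IsTraceClass A) (hinv : IsUnit (1 + A))
    (P Q : H →L[ℂ] H) (hP : P * P = P) (hQ : Q = 1 - P) :
    det (P * Ring.inverse (1 + A) * P + Q) = det (1 + Q * A * Q) / det (1 + A) := by
  subst hQ
  replace hP : IsIdempotentElem P := hP
  set B := Ring.inverse (1 + A)
  have hB : B * (1 + A) = 1 := Ring.inverse_mul_cancel _ hinv
  have hK : IsTraceClass (B - 1) := by
    rw [show B - 1 = -(B * A * 1) by rw [mul_one, ← hB]; noncomm_ring]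
    exact (traceClass H).neg_mem (hA.mul_mul B 1)
  have hdetA : det (1 + A) ≠ 0 := fun h => by
    simpa [hB, hdet_one, h] using hdet_mul _ _ hK hA
  have hdetPQ : det (1 + P * (B - 1) * (1 - P)) = 1 :=
    det_one_add_mul_mul_eq_one hdet_one hdet_mul hdet_rankOne hdet_cont hP.one_sub_mul_self hK
  have hdetQP : det (1 + (1 - P) * A * P) = 1 :=
    det_one_add_mul_mul_eq_one hdet_one hdet_mul hdet_rankOne hdet_cont hP.mul_one_sub_self hA
  have hPBP : P * B * P + (1 - P) = 1 + P * (B - 1) * P := by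
    rw [mul_sub, sub_mul, mul_one, hP.eq]; abel
  rw [hPBP, eq_div_iff hdetA]
  calc det (1 + P * (B - 1) * P) * det (1 + A) = det (1 + P * (B - 1)) * det (1 + A) := by
        rw [hP.one_add_mul_eq_mul, hdet_mul _ _ (hK.mul_mul P _) (hK.mul_mul P P), hdetPQ, one_mul]
    _ = det (1 + (1 - P) * A) := by
        rw [← hdet_mul _ _ (mul_one (P * (B - 1)) ▸ hK.mul_mul P 1) hA,
          one_add_mul_sub_one_mul_one_add hB]
    _ = det (1 + (1 - P) * A * (1 - P)) := by
        rw [hP.one_sub.one_add_mul_eq_mul, sub_sub_cancel,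
          hdet_mul _ _ (hA.mul_mul _ _) (hA.mul_mul _ _), hdetQP, one_mul]

/-- Let `A` be trace class with `I + A` invertible, `P` a bounded projection and `Q = I − P`.
Then `det[P(I+A)⁻¹P + Q] = det(I + QAQ)/det(I + A)`, where `det` is the Fredholm determinant,
characterized by its normalization, multiplicativity, value on rank-one perturbations, and
continuity in the trace norm. -/
theorem det_projection_inverse_formula
    [TopologicalSpace.SeparableSpace H]
    (det : (H →L[ℂ] H) → ℂ)
    (hdet_one : det 1 = 1)
    (hdet_mul : ∀ A B : H →L[ℂ] H, IsTraceClass A → IsTraceClass B →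
      det ((1 + A) * (1 + B)) = det (1 + A) * det (1 + B))
    (hdet_rankOne : ∀ u v : H, det (1 + (innerSL ℂ v).smulRight u) = 1 + (inner ℂ v u : ℂ))
    (hdet_cont : ∀ (A : ℕ → H →L[ℂ] H) (B : H →L[ℂ] H), (∀ n, IsTraceClass (A n)) →
      IsTraceClass B → Tendsto (fun n => traceNorm (A n - B)) atTop (nhds 0) →
      Tendsto (fun n => det (1 + A n)) atTop (nhds (det (1 + B))))
    (A : H →L[ℂ] H) (hA : IsTraceClass A) (hinv : IsUnit (1 + A))
    (P Q : H →L[ℂ] H) (hP : P * P = P) (hQ : Q = 1 - P) :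
    det (P * Ring.inverse (1 + A) * P + Q) = det (1 + Q * A * Q) / det (1 + A) :=
  det_projection_inverse_formula_general det hdet_one hdet_mul hdet_rankOne hdet_cont A hA hinv P Q
    hP hQ

end
end

section
/- Let A_n be a sequence of bounded linear operators on a Hilbert space H converging strongly to an invertible operator A. Then A_n^{-1} converges strongly to A^{-1} if and only if the sequence (A_n) is stable, i.e., the A_n are invertible for all sufficiently large n and sup_{n ≥ n_0} ‖A_n^{-1}‖ < ∞ for some n_0. -/
open Filter Topology

/-!
If `A n⁻¹ → A₀⁻¹` strongly, then `(A n⁻¹ x)` is a convergent, hence bounded, sequence for each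
`x`, and the uniform boundedness principle bounds `‖A n⁻¹‖`. Conversely, writing `y = A₀⁻¹ x`,
we have `A n⁻¹ x - A₀⁻¹ x = A n⁻¹ (A₀ y - A n y)`, whose norm is at most `C ‖A n y - A₀ y‖ → 0`.
-/

section

variable {𝕜 E F : Type*} [NontriviallyNormedField 𝕜] [NormedAddCommGroup E] [NormedSpace 𝕜 E]
  [NormedAddCommGroup F] [NormedSpace 𝕜 F]

theorem ContinuousLinearMap.exists_norm_le_of_tendsto_apply [CompleteSpace E]
    {g : ℕ → E →L[𝕜] F} {f : E → F} (hg : ∀ x, Tendsto (fun n => g n x) atTop (𝓝 (f x))) :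
    ∃ C, ∀ n, ‖g n‖ ≤ C := by
  obtain ⟨C, hC⟩ := banach_steinhaus (g := g) fun x => by
    obtain ⟨C, hC⟩ := (hg x).norm.bddAbove_range
    exact ⟨C, fun n => hC (Set.mem_range_self n)⟩
  exact ⟨C, hC⟩

theorem ContinuousLinearMap.tendsto_apply_of_leftInverse_of_norm_le {ι : Type*} {l : Filter ι}
    {A : ι → E →L[𝕜] F} {B : ι → F →L[𝕜] E} {A₀ : E →L[𝕜] F} {B₀ : F →L[𝕜] E} {C : ℝ}
    (hA : ∀ y, Tendsto (fun n => A n y) l (𝓝 (A₀ y)))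
    (hB : ∀ᶠ n in l, (∀ y, B n (A n y) = y) ∧ ‖B n‖ ≤ C) (hB₀ : ∀ x, A₀ (B₀ x) = x) (x : F) :
    Tendsto (fun n => B n x) l (𝓝 (B₀ x)) := by
  set y := B₀ x
  rw [tendsto_iff_norm_sub_tendsto_zero]
  have hdist : Tendsto (fun n => ‖A n y - A₀ y‖) l (𝓝 0) :=
    tendsto_iff_norm_sub_tendsto_zero.mp (hA y)
  refine squeeze_zero' (.of_forall fun n => norm_nonneg _) ?_ (by simpa using hdist.const_mul C)
  filter_upwards [hB] with n ⟨hBA, hBC⟩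
  have hdiff : B n x - y = B n (A₀ y - A n y) := by rw [map_sub, hB₀, hBA]
  calc ‖B n x - y‖ = ‖B n (A₀ y - A n y)‖ := by rw [hdiff]
    _ ≤ ‖B n‖ * ‖A₀ y - A n y‖ := (B n).le_opNorm _
    _ ≤ C * ‖A n y - A₀ y‖ := by
      rw [norm_sub_rev]
      exact mul_le_mul_of_nonneg_right hBC (norm_nonneg _)

end

/-- Let `A n → A` strongly on a Hilbert space `H`, with `A` invertible. Then the inverses
`(A n)⁻¹` exist for large `n` and converge strongly to `A⁻¹` if and only if the sequence
`(A n)` is stable, i.e. the `A n` are invertible for all large `n` with uniformly bounded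
inverses. -/
theorem strong_convergence_of_inverses_iff_stable
    {H : Type*} [NormedAddCommGroup H] [InnerProductSpace ℂ H] [CompleteSpace H]
    (A : ℕ → H →L[ℂ] H) (A₀ : H →L[ℂ] H) (hA₀ : IsUnit A₀)
    (hstrong : ∀ x : H, Tendsto (fun n => A n x) atTop (nhds (A₀ x))) :
    (∃ N : ℕ, (∀ n ≥ N, IsUnit (A n)) ∧
        ∀ x : H, Tendsto (fun n => Ring.inverse (A n) x) atTop (nhds (Ring.inverse A₀ x))) ↔
      (∃ N : ℕ, (∀ n ≥ N, IsUnit (A n)) ∧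
        ∃ C : ℝ, ∀ n ≥ N, ‖Ring.inverse (A n)‖ ≤ C) := by
  constructor
  · rintro ⟨N, hN, hconv⟩
    obtain ⟨C, hC⟩ := ContinuousLinearMap.exists_norm_le_of_tendsto_apply hconv
    exact ⟨N, hN, C, fun n _ => hC n⟩
  · rintro ⟨N, hN, C, hC⟩
    refine ⟨N, hN, ContinuousLinearMap.tendsto_apply_of_leftInverse_of_norm_le (C := C) hstrong ?_
      fun x => DFunLike.congr_fun (Ring.mul_inverse_cancel A₀ hA₀) x⟩
    filter_upwards [eventually_ge_atTop N] with n hn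
    exact ⟨fun y => DFunLike.congr_fun (Ring.inverse_mul_cancel (A n) (hN n hn)) y, hC n hn⟩
end

section
/- Let a_n ∈ L^∞(𝕋) be uniformly bounded in the L^∞ norm and converge in measure to a ∈ L^∞(𝕋). Then the Toeplitz operators T(a_n) converge strongly to T(a) on ℓ^2(ℤ_+), the Hankel operators H(a_n) converge strongly to H(a), and the same holds for the adjoint sequences. -/
open MeasureTheory Real Filter

noncomputable section

/-- The Hilbert space `ℓ²(ℤ₊)`. -/
abbrev ellTwo := lp (fun _ : ℕ => ℂ) 2

/-- The `k`-th Fourier coefficient of the function `θ ↦ a(e^{iθ})`. -/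
noncomputable def fCoeff (a : ℝ → ℂ) (k : ℤ) : ℂ :=
  (1 / (2 * (π : ℂ))) * ∫ θ in Set.Ioc (0 : ℝ) (2 * π), a θ * Complex.exp (-Complex.I * k * θ)

/-!
The matrix entries of `T(b)` and `H(b)` are `b̂ (j - ν k)`, with `ν k = k`, resp. `ν k = -k - 1`.
So for finitely supported `x` the entries of `T(b) x` are Fourier coefficients of `b · P`, where
`P = ∑ₖ xₖ e^{i ν(k) θ}` has `‖P‖_{L²} = ‖x‖`, and Bessel's inequality gives
`‖T(b)‖, ‖H(b)‖ ≤ ‖b‖_∞`. The columns of `T(aₙ) - T(a)`, `H(aₙ) - H(a)` and of their adjoints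
consist, up to conjugation, of Fourier coefficients of `aₙ - a`, so by Bessel again their `ℓ²` norms
are at most `‖aₙ - a‖_{L²}`, which tends to `0` by Vitali's convergence theorem. Uniformly bounded
operators converging on every basis vector converge strongly.
-/

open Set Function Complex Topology AddCircle ComplexConjugate

namespace ellTwo

theorem mem_of_isClosed {S : Set ellTwo} (hS : IsClosed S)
    (h : ∀ (s : Finset ℕ) (c : ℕ → ℂ), ∑ k ∈ s, lp.single 2 k (c k) ∈ S) (x : ellTwo) : x ∈ S :=
  hS.mem_of_tendsto (lp.hasSum_single ENNReal.ofNat_ne_top x) (.of_forall fun s => h s _)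

theorem norm_sq_eq_tsum (x : ellTwo) : ‖x‖ ^ 2 = ∑' j, ‖x j‖ ^ 2 := by
  exact_mod_cast lp.norm_rpow_eq_tsum (by norm_num) x

theorem norm_sum_single_sq (s : Finset ℕ) (c : ℕ → ℂ) :
    ‖∑ k ∈ s, lp.single 2 k (c k)‖ ^ 2 = ∑ k ∈ s, ‖c k‖ ^ 2 := by
  exact_mod_cast lp.norm_sum_single (p := 2) (by norm_num) c s

theorem map_sum_single {F : Type*} [NormedAddCommGroup F] [NormedSpace ℂ F]
    (A : ellTwo →L[ℂ] F) (s : Finset ℕ) (c : ℕ → ℂ) :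
    A (∑ k ∈ s, lp.single 2 k (c k)) = ∑ k ∈ s, c k • A (lp.single 2 k 1) := by
  simp only [map_sum, ← map_smul, ← lp.single_smul, smul_eq_mul, mul_one]

theorem tendsto_apply_of_tendsto_apply_single {ι F : Type*} [NormedAddCommGroup F]
    [NormedSpace ℂ F] {l : Filter ι} {S : ι → ellTwo →L[ℂ] F} {S₀ : ellTwo →L[ℂ] F} {M : ℝ}
    (hM : ∀ i, ‖S i‖ ≤ M)
    (hS : ∀ k, Tendsto (fun i => S i (lp.single 2 k 1)) l (𝓝 (S₀ (lp.single 2 k 1))))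
    (x : ellTwo) : Tendsto (fun i => S i x) l (𝓝 (S₀ x)) := by
  have hequi : Equicontinuous ((↑) ∘ S) :=
    ((NormedSpace.equicontinuous_TFAE S).out 5 1).1 (by exact ⟨M, hM⟩)
  refine mem_of_isClosed (hequi.isClosed_setOfPred_tendsto S₀.continuous) (fun s c => ?_) x
  simpa only [mem_ofPred_eq, comp_apply, map_sum_single] using
    tendsto_finsetSum s fun k _ => (hS k).const_smul (c k)

theorem adjoint_apply_single_apply (A : ellTwo →L[ℂ] ellTwo) (j k : ℕ) :
    ContinuousLinearMap.adjoint A (lp.single 2 k 1) j = conj (A (lp.single 2 j 1) k) := by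
  calc ContinuousLinearMap.adjoint A (lp.single 2 k 1) j
      = inner ℂ (lp.single 2 j (1 : ℂ)) (ContinuousLinearMap.adjoint A (lp.single 2 k 1)) := by
        simp [lp.inner_single_left]
    _ = inner ℂ (A (lp.single 2 j 1)) (lp.single 2 k 1) :=
        ContinuousLinearMap.adjoint_inner_right _ _ _
    _ = conj (A (lp.single 2 j 1) k) := by simp [lp.inner_single_right]

end ellTwo

namespace MeasureTheory

variable {ι α E : Type*} {m : MeasurableSpace α} {μ : Measure α}

theorem MemLp.integral_norm_sq_eq [NormedAddCommGroup E] {f : α → E} (hf : MemLp f 2 μ) :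
    ∫ x, ‖f x‖ ^ 2 ∂μ = (eLpNorm f 2 μ).toReal ^ 2 := by
  rw [hf.eLpNorm_eq_integral_rpow_norm two_ne_zero ENNReal.ofNat_ne_top,
    ENNReal.toReal_ofReal (by positivity), ← Real.rpow_natCast, ← Real.rpow_mul (by positivity)]
  simp

theorem unifIntegrable_of_forall_norm_le [NormedAddCommGroup E] {p : ENNReal} (hp : 1 ≤ p)
    (hp' : p ≠ ⊤) {f : ι → α → E} {C : ℝ} (hf : ∀ i, AEStronglyMeasurable (f i) μ)
    (hC : ∀ i x, ‖f i x‖ ≤ C) : UnifIntegrable f p μ := by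
  refine unifIntegrable_of hp hp' hf fun ε hε => ⟨C.toNNReal + 1, fun i => ?_⟩
  have hempty : {x | C.toNNReal + 1 ≤ ‖f i x‖₊} = ∅ := by
    refine eq_empty_of_forall_notMem fun x hx => ?_
    have hx' : (C.toNNReal : ℝ) + 1 ≤ ‖f i x‖ := by exact_mod_cast hx
    linarith [hC i x, Real.le_coe_toNNReal C]
  simp [hempty]

theorem tendsto_eLpNorm_sub_of_tendstoInMeasure_of_norm_le [IsFiniteMeasure μ]
    [NormedAddCommGroup E] {p : ENNReal} (hp : 1 ≤ p) (hp' : p ≠ ⊤) {f : ℕ → α → E} {g : α → E}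
    {C : ℝ} (hf : ∀ n, AEStronglyMeasurable (f n) μ) (hC : ∀ n x, ‖f n x‖ ≤ C) (hg : MemLp g p μ)
    (hfg : TendstoInMeasure μ f atTop g) :
    Tendsto (fun n => eLpNorm (f n - g) p μ) atTop (𝓝 0) :=
  tendsto_Lp_finite_of_tendstoInMeasure hp hp' hf hg
    (unifIntegrable_of_forall_norm_le hp hp' hf hC) hfg

theorem tendstoInMeasure_restrict_iff [SeminormedAddCommGroup E] {s : Set α}
    (hs : MeasurableSet s) {l : Filter ι} {f : ι → α → E} {g : α → E} :
    TendstoInMeasure (μ.restrict s) f l g ↔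
      ∀ ε, 0 < ε → Tendsto (fun i => μ {x ∈ s | ε ≤ ‖f i x - g x‖}) l (𝓝 0) := by
  simp only [tendstoInMeasure_iff_norm, Measure.restrict_apply' hs, Set.inter_comm _ s]
  rfl

theorem MemLp.memLp_liftIoc_haarAddCircle {T : ℝ} [Fact (0 < T)] {f : ℝ → ℂ} {p : ENNReal}
    (hf : MemLp f p (volume.restrict (Ioc 0 T))) :
    MemLp (liftIoc T 0 f) p AddCircle.haarAddCircle :=
  memLp_haarAddCircle_iff.2 (MemLp.memLp_liftIoc (by rwa [zero_add]))

end MeasureTheory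

section Circle

variable {T : ℝ} [hT : Fact (0 < T)]

theorem integral_liftIoc_haarAddCircle {E : Type*} [NormedAddCommGroup E] [NormedSpace ℝ E]
    (f : ℝ → E) : ∫ t, liftIoc T 0 f t ∂haarAddCircle = T⁻¹ • ∫ θ in Ioc 0 T, f θ := by
  rw [integral_haarAddCircle, integral_liftIoc_eq_intervalIntegral, zero_add,
    intervalIntegral.integral_of_le hT.out.le]

theorem tsum_norm_fourierCoeff_comp_sq_le {F : AddCircle T → ℂ} (hF : MemLp F 2 haarAddCircle)
    {ι : ℕ → ℤ} (hι : Injective ι) :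
    ∑' j, ‖fourierCoeff F (ι j)‖ ^ 2 ≤ ∫ t, ‖F t‖ ^ 2 ∂haarAddCircle := by
  have hnorm : ∫ t, ‖F t‖ ^ 2 ∂haarAddCircle = ∫ t, ‖hF.toLp F t‖ ^ 2 ∂haarAddCircle :=
    integral_congr_ae (hF.coeFn_toLp.symm.fun_comp (‖·‖ ^ 2))
  rw [fourierCoeff_congr_ae hF.coeFn_toLp.symm, hnorm, ← tsum_sq_fourierCoeff]
  exact tsum_comp_le_tsum_of_inj (hasSum_sq_fourierCoeff _).summable (fun _ => by positivity) hι

theorem fourierCoeff_mul_fourier (B : AddCircle T → ℂ) (m n : ℤ) :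
    fourierCoeff (fun t => B t * fourier m t) n = fourierCoeff B (n - m) := by
  simp only [fourierCoeff]
  congr 1 with t
  rw [show -(n - m) = m + -n by ring, fourier_add, smul_eq_mul, smul_eq_mul]
  ring

theorem fourierCoeff_mul_sum_fourier {B : AddCircle T → ℂ} (hB : Integrable B haarAddCircle)
    (s : Finset ℕ) (c : ℕ → ℂ) (ν : ℕ → ℤ) (n : ℤ) :
    fourierCoeff (fun t => B t * ∑ k ∈ s, c k * fourier (ν k) t) n
      = ∑ k ∈ s, c k * fourierCoeff B (n - ν k) := by
  have hterm : ∀ k, Integrable (fun t => c k * (B t * fourier (ν k) t)) haarAddCircle := fun k =>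
    ((hB.fourier_smul (ν k)).const_mul (c k)).congr (.of_forall fun t => by simp [mul_comm])
  have hfun : (fun t => B t * ∑ k ∈ s, c k * fourier (ν k) t)
      = ∑ k ∈ s, fun t => c k * (B t * fourier (ν k) t) := by
    ext t
    simp only [Finset.mul_sum, Finset.sum_apply]
    exact Finset.sum_congr rfl fun k _ => by ring
  rw [hfun, fourierCoeff.sum s _ fun k _ => hterm k, Finset.sum_apply]
  exact Finset.sum_congr rfl fun k _ => by
    rw [fourierCoeff.const_mul, fourierCoeff_mul_fourier]

theorem integral_norm_sum_fourier_sq (s : Finset ℕ) (c : ℕ → ℂ) {ν : ℕ → ℤ} (hν : Injective ν) :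
    ∫ t : AddCircle T, ‖∑ k ∈ s, c k * fourier (ν k) t‖ ^ 2 ∂haarAddCircle
      = ∑ k ∈ s, ‖c k‖ ^ 2 := by
  set P : C(AddCircle T, ℂ) := ∑ k ∈ s, c k • fourier (ν k)
  have hP : ContinuousMap.toLp 2 haarAddCircle ℂ P = ∑ k ∈ s, c k • fourierLp 2 (ν k) := by
    simp [P, map_sum, map_smul]
  apply Complex.ofReal_injective
  calc ((∫ t : AddCircle T, ‖∑ k ∈ s, c k * fourier (ν k) t‖ ^ 2 ∂haarAddCircle : ℝ) : ℂ)
      = inner ℂ (ContinuousMap.toLp 2 haarAddCircle ℂ P)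
          (ContinuousMap.toLp 2 haarAddCircle ℂ P) := by
        rw [ContinuousMap.inner_toLp, ← integral_complex_ofReal]
        congr 1 with t
        rw [Complex.mul_conj']
        simp [P]
    _ = ∑ k ∈ s, ((‖c k‖ ^ 2 : ℝ) : ℂ) := by
        rw [hP]
        simpa [Complex.conj_mul'] using ((orthonormal_fourier (T := T)).comp ν hν).inner_sum c c s
    _ = ((∑ k ∈ s, ‖c k‖ ^ 2 : ℝ) : ℂ) := by push_cast; rfl

theorem opNorm_le_of_apply_single_eq_fourierCoeff {B : AddCircle T → ℂ} {C : ℝ}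
    (hB : AEStronglyMeasurable B haarAddCircle) (hBC : ∀ t, ‖B t‖ ≤ C) {ν : ℕ → ℤ}
    (hν : Injective ν) {A : ellTwo →L[ℂ] ellTwo}
    (hA : ∀ j k : ℕ, A (lp.single 2 k 1) j = fourierCoeff B (j - ν k)) : ‖A‖ ≤ C := by
  have hC : 0 ≤ C := (norm_nonneg _).trans (hBC 0)
  refine A.opNorm_le_bound hC fun x => ellTwo.mem_of_isClosed (S := {x | ‖A x‖ ≤ C * ‖x‖})
    (isClosed_le (by fun_prop) (by fun_prop)) (fun s c => ?_) x
  set P : C(AddCircle T, ℂ) := ∑ k ∈ s, c k • fourier (ν k)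
  have hP : ∀ t, P t = ∑ k ∈ s, c k * fourier (ν k) t := fun t => by simp [P]
  have hP2 : MemLp P 2 haarAddCircle := P.memLp _ ℂ
  have hBP : MemLp (fun t => B t * P t) 2 haarAddCircle :=
    (hP2.const_mul (C : ℂ)).of_le (hB.mul P.continuous.aestronglyMeasurable)
      (.of_forall fun t => by
        rw [norm_mul, norm_mul, Complex.norm_of_nonneg hC]
        exact mul_le_mul_of_nonneg_right (hBC t) (norm_nonneg _))
  have hentries : ∀ j : ℕ,
      A (∑ k ∈ s, lp.single 2 k (c k)) j = fourierCoeff (fun t => B t * P t) j := by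
    intro j
    simp only [hP, fourierCoeff_mul_sum_fourier (Integrable.of_bound hB C (.of_forall hBC)),
      ellTwo.map_sum_single, lp.coeFn_sum, Finset.sum_apply, lp.coeFn_smul, Pi.smul_apply,
      smul_eq_mul, hA]
  have hsq : ‖A (∑ k ∈ s, lp.single 2 k (c k))‖ ^ 2
      ≤ (C * ‖∑ k ∈ s, lp.single 2 k (c k)‖) ^ 2 := calc
    _ = ∑' j : ℕ, ‖fourierCoeff (fun t => B t * P t) j‖ ^ 2 := by
        simp only [ellTwo.norm_sq_eq_tsum, hentries]
    _ ≤ ∫ t, ‖B t * P t‖ ^ 2 ∂haarAddCircle :=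
        tsum_norm_fourierCoeff_comp_sq_le hBP Nat.cast_injective
    _ ≤ ∫ t, C ^ 2 * ‖P t‖ ^ 2 ∂haarAddCircle := by
        refine integral_mono (hBP.integrable_norm_pow two_ne_zero)
          ((hP2.integrable_norm_pow two_ne_zero).const_mul _) fun t => ?_
        rw [norm_mul, mul_pow]
        gcongr
        exact hBC t
    _ = (C * ‖∑ k ∈ s, lp.single 2 k (c k)‖) ^ 2 := by
        rw [integral_const_mul, mul_pow, ellTwo.norm_sum_single_sq]
        simp only [hP, integral_norm_sum_fourier_sq s c hν]
  exact (pow_le_pow_iff_left₀ (norm_nonneg _) (by positivity) two_ne_zero).1 hsq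

end Circle

local instance : Fact (0 < 2 * π) := ⟨two_pi_pos⟩

theorem fCoeff_eq_fourierCoeff_liftIoc (f : ℝ → ℂ) (n : ℤ) :
    fCoeff f n = fourierCoeff (liftIoc (2 * π) 0 f) n := by
  rw [fourierCoeff_eq_intervalIntegral _ n 0, zero_add,
    intervalIntegral.integral_of_le two_pi_pos.le, fCoeff, Complex.real_smul]
  push_cast
  congr 1
  refine setIntegral_congr_fun measurableSet_Ioc fun θ hθ => ?_
  rw [liftIoc_coe_apply (by rwa [zero_add]), smul_eq_mul, fourier_coe_apply, mul_comm]
  congr 2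
  push_cast
  field_simp

theorem fCoeff_sub {f g : ℝ → ℂ} (hf : IntegrableOn f (Ioc 0 (2 * π)))
    (hg : IntegrableOn g (Ioc 0 (2 * π))) (n : ℤ) :
    fCoeff (f - g) n = fCoeff f n - fCoeff g n := by
  have hmul : ∀ h : ℝ → ℂ, IntegrableOn h (Ioc 0 (2 * π)) →
      IntegrableOn (fun θ => h θ * exp (-I * n * θ)) (Ioc 0 (2 * π)) := fun h hh =>
    hh.mul_bdd (c := 1) (by fun_prop) (.of_forall fun θ => by simp [Complex.norm_exp])
  simp only [fCoeff, Pi.sub_apply, sub_mul, ← mul_sub]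
  rw [integral_sub (hmul f hf) (hmul g hg)]

theorem opNorm_le_of_apply_single_eq_fCoeff {b : ℝ → ℂ} {C : ℝ}
    (hb : AEStronglyMeasurable b (volume.restrict (Ioc 0 (2 * π)))) (hbC : ∀ θ, ‖b θ‖ ≤ C)
    {ν : ℕ → ℤ} (hν : Injective ν) {A : ellTwo →L[ℂ] ellTwo}
    (hA : ∀ j k : ℕ, A (lp.single 2 k 1) j = fCoeff b (j - ν k)) : ‖A‖ ≤ C :=
  opNorm_le_of_apply_single_eq_fourierCoeff
    (memLp_top_of_bound hb C (.of_forall hbC)).memLp_liftIoc_haarAddCircle.aestronglyMeasurable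
    (fun _ => hbC _) hν (by simpa only [fCoeff_eq_fourierCoeff_liftIoc] using hA)

theorem norm_sq_le_of_norm_apply_eq_fCoeff {f : ℝ → ℂ}
    (hf : MemLp f 2 (volume.restrict (Ioc 0 (2 * π)))) {ι : ℕ → ℤ} (hι : Injective ι)
    {v : ellTwo} (hv : ∀ j, ‖v j‖ = ‖fCoeff f (ι j)‖) :
    ‖v‖ ^ 2 ≤ (2 * π)⁻¹ * ∫ θ in Ioc 0 (2 * π), ‖f θ‖ ^ 2 := calc
  ‖v‖ ^ 2 = ∑' j, ‖fourierCoeff (liftIoc (2 * π) 0 f) (ι j)‖ ^ 2 := by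
    simp only [ellTwo.norm_sq_eq_tsum, hv, fCoeff_eq_fourierCoeff_liftIoc]
  _ ≤ ∫ t, ‖liftIoc (2 * π) 0 f t‖ ^ 2 ∂haarAddCircle :=
    tsum_norm_fourierCoeff_comp_sq_le hf.memLp_liftIoc_haarAddCircle hι
  _ = (2 * π)⁻¹ * ∫ θ in Ioc 0 (2 * π), ‖f θ‖ ^ 2 :=
    integral_liftIoc_haarAddCircle (fun θ => ‖f θ‖ ^ 2)

theorem tendsto_of_norm_apply_sub_eq_fCoeff_sub {f : ℕ → ℝ → ℂ} {f₀ : ℝ → ℂ}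
    (hf : ∀ n, MemLp (f n) 2 (volume.restrict (Ioc 0 (2 * π))))
    (hf₀ : MemLp f₀ 2 (volume.restrict (Ioc 0 (2 * π))))
    (hlim : Tendsto (fun n => eLpNorm (f n - f₀) 2 (volume.restrict (Ioc 0 (2 * π)))) atTop (𝓝 0))
    {ι : ℕ → ℤ} (hι : Injective ι) {u : ℕ → ellTwo} {u₀ : ellTwo}
    (hu : ∀ n j, ‖u n j - u₀ j‖ = ‖fCoeff (f n) (ι j) - fCoeff f₀ (ι j)‖) :
    Tendsto u atTop (𝓝 u₀) := by
  set c := √(2 * π)⁻¹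
  have hbound (n : ℕ) :
      ‖u n - u₀‖ ≤ c * (eLpNorm (f n - f₀) 2 (volume.restrict (Ioc 0 (2 * π)))).toReal := by
    have hsub := (hf n).sub hf₀
    refine (pow_le_pow_iff_left₀ (norm_nonneg _) (by positivity) two_ne_zero).1 ?_
    rw [mul_pow, Real.sq_sqrt (by positivity), ← hsub.integral_norm_sq_eq]
    refine norm_sq_le_of_norm_apply_eq_fCoeff hsub hι fun j => ?_
    rw [lp.coeFn_sub, Pi.sub_apply, hu, fCoeff_sub ((hf n).integrable one_le_two)
      (hf₀.integrable one_le_two)]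
  rw [tendsto_iff_norm_sub_tendsto_zero]
  refine squeeze_zero (fun n => norm_nonneg _) hbound ?_
  simpa using ((ENNReal.tendsto_toReal ENNReal.zero_ne_top).comp hlim).const_mul c

/-- If `aₙ ∈ L^∞(𝕋)` are uniformly bounded and converge in measure to `a`, then the Toeplitz
operators `T(aₙ)` and the Hankel operators `H(aₙ)` converge strongly on `ℓ²` to `T(a)`, `H(a)`,
and similarly for the adjoints. -/
theorem toeplitz_hankel_strong_convergence
    (a : ℕ → ℝ → ℂ) (a₀ : ℝ → ℂ) (C : ℝ)
    (hbound : ∀ n θ, ‖a n θ‖ ≤ C) (hbound₀ : ∀ θ, ‖a₀ θ‖ ≤ C)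
    (hmeas : ∀ n, Measurable (a n)) (hmeas₀ : Measurable a₀)
    (hconv : ∀ ε : ℝ, 0 < ε →
      Tendsto (fun n => volume {θ ∈ Set.Ioc (0 : ℝ) (2 * π) | ε ≤ ‖a n θ - a₀ θ‖})
        atTop (nhds 0))
    (T : ℕ → ellTwo →L[ℂ] ellTwo) (T₀ : ellTwo →L[ℂ] ellTwo)
    (Hk : ℕ → ellTwo →L[ℂ] ellTwo) (H₀ : ellTwo →L[ℂ] ellTwo)
    (hT : ∀ n j k : ℕ, (T n (lp.single 2 k 1)) j = fCoeff (a n) ((j : ℤ) - (k : ℤ)))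
    (hT₀ : ∀ j k : ℕ, (T₀ (lp.single 2 k 1)) j = fCoeff a₀ ((j : ℤ) - (k : ℤ)))
    (hH : ∀ n j k : ℕ, (Hk n (lp.single 2 k 1)) j = fCoeff (a n) ((j : ℤ) + (k : ℤ) + 1))
    (hH₀ : ∀ j k : ℕ, (H₀ (lp.single 2 k 1)) j = fCoeff a₀ ((j : ℤ) + (k : ℤ) + 1)) :
    (∀ x : ellTwo, Tendsto (fun n => T n x) atTop (nhds (T₀ x))) ∧
    (∀ x : ellTwo, Tendsto (fun n => Hk n x) atTop (nhds (H₀ x))) ∧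
    (∀ x : ellTwo,
      Tendsto (fun n => ContinuousLinearMap.adjoint (T n) x) atTop
        (nhds (ContinuousLinearMap.adjoint T₀ x))) ∧
    (∀ x : ellTwo,
      Tendsto (fun n => ContinuousLinearMap.adjoint (Hk n) x) atTop
        (nhds (ContinuousLinearMap.adjoint H₀ x))) := by
  have hL2 : ∀ n, MemLp (a n) 2 (volume.restrict (Ioc 0 (2 * π))) := fun n =>
    .of_bound (hmeas n).aestronglyMeasurable C (.of_forall (hbound n))
  have hL2₀ : MemLp a₀ 2 (volume.restrict (Ioc 0 (2 * π))) :=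
    .of_bound hmeas₀.aestronglyMeasurable C (.of_forall hbound₀)
  have hlim : Tendsto (fun n => eLpNorm (a n - a₀) 2 (volume.restrict (Ioc 0 (2 * π)))) atTop
      (𝓝 0) :=
    tendsto_eLpNorm_sub_of_tendstoInMeasure_of_norm_le one_le_two ENNReal.ofNat_ne_top
      (fun n => (hL2 n).1) hbound hL2₀ ((tendstoInMeasure_restrict_iff measurableSet_Ioc).2 hconv)
  have hcol {ι : ℕ → ℤ} (hι : Injective ι) {u : ℕ → ellTwo} {u₀ : ellTwo}
      (hu : ∀ n j, ‖u n j - u₀ j‖ = ‖fCoeff (a n) (ι j) - fCoeff a₀ (ι j)‖) :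
      Tendsto u atTop (𝓝 u₀) :=
    tendsto_of_norm_apply_sub_eq_fCoeff_sub hL2 hL2₀ hlim hι hu
  have hT_le (n : ℕ) : ‖T n‖ ≤ C :=
    opNorm_le_of_apply_single_eq_fCoeff (hmeas n).aestronglyMeasurable (hbound n)
      Nat.cast_injective (hT n)
  have hH_le (n : ℕ) : ‖Hk n‖ ≤ C :=
    opNorm_le_of_apply_single_eq_fCoeff (hmeas n).aestronglyMeasurable (hbound n)
      (ν := fun k => -k - 1) (fun _ _ h => by simpa using h) fun j k => by rw [hH]; ring_nf
  have hadj_le {A : ellTwo →L[ℂ] ellTwo} (hA : ‖A‖ ≤ C) : ‖ContinuousLinearMap.adjoint A‖ ≤ C :=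
    (ContinuousLinearMap.adjoint.norm_map A).trans_le hA
  refine ⟨ellTwo.tendsto_apply_of_tendsto_apply_single hT_le fun k =>
      hcol (ι := fun j => j - k) (fun _ _ h => by simpa using h) fun n j => by rw [hT, hT₀],
    ellTwo.tendsto_apply_of_tendsto_apply_single hH_le fun k =>
      hcol (ι := fun j => j + k + 1) (fun _ _ h => by simpa using h) fun n j => by rw [hH, hH₀],
    ellTwo.tendsto_apply_of_tendsto_apply_single (fun n => hadj_le (hT_le n)) fun k =>
      hcol (ι := fun j => k - j) (fun _ _ h => by simpa using h) fun n j => ?_,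
    ellTwo.tendsto_apply_of_tendsto_apply_single (fun n => hadj_le (hH_le n)) fun k =>
      hcol (ι := fun j => k + j + 1) (fun _ _ h => by simpa using h) fun n j => ?_⟩
  all_goals rw [ellTwo.adjoint_apply_single_apply, ellTwo.adjoint_apply_single_apply, ← map_sub,
    RCLike.norm_conj]
  · rw [hT, hT₀]
  · rw [hH, hH₀]

end
end
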